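/- There exists t₀ > 0 such that for all (m,n), (m′,n′) ∈ ℤ² with m ≥ 1, m′ ≥ 1, n ≥ 0, n′ ≥ 0, t_{(m,n)} ≥ t₀, t_{(m′,n′)} ≥ t₀, and such that each of the pairs (n, m) and (n′, m′) is a good lower approximation or a good upper approximation of the second kind of α: t_{(m,n)} ≥ t_{(m′,n′)} if and only if m ≥ m′. -/

import Mathlib

/-- `t_{(m,n)} = (n − βm)/(α − β)`, the coordinate of `(m,n)` along the direction `(1,α)`
in the basis `(1,α), (1,β)`. -/
noncomputable def tcoord (α β : ℝ) (m n : ℤ) : ℝ := ((n : ℝ) - β * m) / (α - β)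

/-- `s_{(m,n)} = (αm − n)/(α − β)`, the coordinate of `(m,n)` along the direction `(1,β)`. -/
noncomputable def scoord (α β : ℝ) (m n : ℤ) : ℝ := (α * m - (n : ℝ)) / (α - β)

/-- The parallelogram `R_{(m,n)}` with opposite vertices `(0,0)` and `(m,n)` whose sides are
parallel to `(1,α)` and `(1,β)`:
`{a·(1,α) + b·(1,β) : a between 0 and t_{(m,n)}, b between 0 and s_{(m,n)}}`. -/
def Rpar (α β : ℝ) (m n : ℤ) : Set (ℝ × ℝ) :=
  {p | ∃ a b : ℝ, a ∈ Set.uIcc 0 (tcoord α β m n) ∧ b ∈ Set.uIcc 0 (scoord α β m n) ∧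
    p = (a + b, a * α + b * β)}

/-- The interior of the parallelogram `R_{(m,n)}` contains no point of `ℤ²`. -/
def NoLatticeInterior (α β : ℝ) (m n : ℤ) : Prop :=
  ∀ p ∈ interior (Rpar α β m n), ¬ ∃ k l : ℤ, p = ((k : ℝ), (l : ℝ))

/-- `(p,q)` (with `q ≥ 1` and `p − qα < 0`) is a *good lower approximation of the second kind*
of `α`: `|p − qα| < |p′ − q′α|` for every `(p′,q′) ≠ (p,q)` with `1 ≤ q′ ≤ q` and
`p′ − q′α < 0`. -/
def GoodLower (α : ℝ) (p q : ℤ) : Prop :=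
  1 ≤ q ∧ (p : ℝ) - q * α < 0 ∧
    ∀ p' q' : ℤ, (p', q') ≠ (p, q) → 1 ≤ q' → q' ≤ q → (p' : ℝ) - q' * α < 0 →
      |(p : ℝ) - q * α| < |(p' : ℝ) - q' * α|

/-- `(p,q)` (with `q ≥ 1` and `p − qα > 0`) is a *good upper approximation of the second kind*
of `α`. -/
def GoodUpper (α : ℝ) (p q : ℤ) : Prop :=
  1 ≤ q ∧ 0 < (p : ℝ) - q * α ∧
    ∀ p' q' : ℤ, (p', q') ≠ (p, q) → 1 ≤ q' → q' ≤ q → 0 < (p' : ℝ) - q' * α →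
      |(p : ℝ) - q * α| < |(p' : ℝ) - q' * α|

/-!
`α` is irrational: otherwise some integer point `(m, n) ≠ 0` lies on the eigenline `ℝ (1, α)`,
and the integer points `A^k (m, n) = λ^k (m, n)` would tend to `0`.

Since `t_{(m,n)} = m + (n - mα)/(α - β)`, the order of the `t`-coordinates agrees with the order
of the `m`'s as soon as all errors `|n - mα|` are below `1/2` and `(α - β)/2`. An irrational `α`
has lower and upper approximations `p - qα` of either sign arbitrarily close to `0`, and a good
approximation `(n, m)` whose `m` exceeds their denominators must beat them. Finally, every good
approximation has error at most `1`, so a large `t`-coordinate forces a large `m`.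
-/

open Set

theorem irrational_of_eigenvector (A : Matrix (Fin 2) (Fin 2) ℤ) {lam α : ℝ}
    (hlam0 : lam ≠ 0) (hlam1 : |lam| < 1)
    (h0 : (A 0 0 : ℝ) + A 0 1 * α = lam) (h1 : (A 1 0 : ℝ) + A 1 1 * α = lam * α) :
    Irrational α := by
  rintro ⟨r, rfl⟩
  have lam_mul : ∀ x : ℝ, (∃ a b : ℤ, (a : ℝ) = x ∧ (b : ℝ) = x * r) →
      ∃ a b : ℤ, (a : ℝ) = lam * x ∧ (b : ℝ) = lam * x * r := by
    rintro x ⟨a, b, rfl, hb⟩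
    refine ⟨A 0 0 * a + A 0 1 * b, A 1 0 * a + A 1 1 * b, ?_, ?_⟩ <;> push_cast
    · linear_combination (a : ℝ) * h0 + (A 0 1 : ℝ) * hb
    · linear_combination (a : ℝ) * h1 + (A 1 1 : ℝ) * hb
  have lam_pow_mul : ∀ k : ℕ,
      ∃ a b : ℤ, (a : ℝ) = lam ^ k * r.den ∧ (b : ℝ) = lam ^ k * r.den * r := by
    intro k
    induction k with
    | zero => exact ⟨r.den, r.num, by simp, by simp [Rat.cast_def]; field_simp⟩
    | succ k ih => simpa only [pow_succ', mul_assoc] using lam_mul _ ih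
  obtain ⟨k, hk⟩ := exists_pow_lt_of_lt_one (show 0 < 1 / (r.den : ℝ) by positivity) hlam1
  obtain ⟨a, -, ha, -⟩ := lam_pow_mul k
  have ha0 : a ≠ 0 := by
    rintro rfl
    simp [hlam0] at ha
  have ha1 : |(a : ℝ)| < 1 := by
    rw [ha, abs_mul, abs_pow, Nat.abs_cast, ← lt_div_iff₀ (by positivity)]
    exact hk
  exact ha0 (Int.abs_lt_one_iff.mp (by exact_mod_cast ha1))

theorem Int.eq_of_abs_sub_lt_half {x : ℝ} {n n' : ℤ} (h : |(n : ℝ) - x| < 1 / 2)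
    (h' : |(n' : ℝ) - x| < 1 / 2) : n = n' := by
  have hlt : |((n - n' : ℤ) : ℝ)| < 1 := by
    push_cast
    calc |(n : ℝ) - n'| ≤ |(n : ℝ) - x| + |x - n'| := abs_sub_le _ _ _
      _ < 1 := by linarith [abs_sub_comm x n']
  have := Int.abs_lt_one_iff.mp (by exact_mod_cast hlt)
  omega

namespace Irrational

variable {α : ℝ}

theorem sub_intCast_mul_ne_zero (hα : Irrational α) (p : ℤ) {q : ℤ} (hq : q ≠ 0) :
    (p : ℝ) - q * α ≠ 0 :=
  sub_ne_zero.mpr ((hα.intCast_mul hq).ne_int p).symm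

theorem exists_abs_sub_mul_mem_Ioo (hα : Irrational α) {ε : ℝ} (hε : 0 < ε) :
    ∃ p q : ℤ, 1 ≤ q ∧ |(p : ℝ) - q * α| ∈ Ioo 0 ε := by
  obtain ⟨n, hn⟩ := exists_nat_one_div_lt hε
  obtain ⟨p, q, hq, -, hpq⟩ := Real.exists_int_int_abs_mul_sub_le α n.succ_pos
  refine ⟨p, q, hq, abs_pos.mpr (hα.sub_intCast_mul_ne_zero p hq.ne'), ?_⟩
  rw [abs_sub_comm]
  refine hpq.trans_lt (lt_of_le_of_lt ?_ hn)
  gcongr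
  linarith

/-- If Dirichlet's theorem only provides a lower approximation `p - qα = -u`, then
`⌊1/u⌋ (p - qα) + 1 = u · fract (1/u)` is an upper one of size less than `u`. -/
theorem exists_sub_mul_mem_Ioo (hα : Irrational α) {ε : ℝ} (hε : 0 < ε) :
    ∃ p q : ℤ, 1 ≤ q ∧ (p : ℝ) - q * α ∈ Ioo 0 ε := by
  obtain ⟨p, q, hq, hpos, hlt⟩ := hα.exists_abs_sub_mul_mem_Ioo (lt_min hε one_pos)
  rcases lt_or_gt_of_ne (abs_pos.mp hpos) with hneg | hpos'
  · rw [abs_of_neg hneg, lt_min_iff] at hlt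
    set u : ℝ := q * α - p with hu_def
    set N : ℤ := ⌊u⁻¹⌋
    have hu : 0 < u := by linarith
    have hN : 1 ≤ N := Int.le_floor.mpr (by simpa using (one_le_inv₀ hu).mpr (by linarith))
    have hfract : ((N * p + 1 : ℤ) : ℝ) - (N * q : ℤ) * α = u * Int.fract u⁻¹ := by
      rw [Int.fract, mul_sub, mul_inv_cancel₀ hu.ne']
      push_cast
      linear_combination (-(N : ℝ)) * hu_def
    refine ⟨N * p + 1, N * q, one_le_mul_of_one_le_of_one_le hN hq, ?_, ?_⟩
    · refine lt_of_le_of_ne ?_ (hα.sub_intCast_mul_ne_zero _ (by positivity)).symm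
      rw [hfract]
      exact mul_nonneg hu.le (Int.fract_nonneg _)
    · rw [hfract]
      calc u * Int.fract u⁻¹ < u * 1 := by gcongr; exact Int.fract_lt_one _
        _ < ε := by linarith
  · rw [abs_of_pos hpos', lt_min_iff] at hlt
    exact ⟨p, q, hq, hpos', hlt.1⟩

theorem exists_sub_mul_mem_Ioo_neg (hα : Irrational α) {ε : ℝ} (hε : 0 < ε) :
    ∃ p q : ℤ, 1 ≤ q ∧ (p : ℝ) - q * α ∈ Ioo (-ε) 0 := by
  obtain ⟨p, q, hq, h0, hε⟩ := hα.neg.exists_sub_mul_mem_Ioo hε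
  exact ⟨-p, q, hq, by push_cast; linarith, by push_cast; linarith⟩

end Irrational

namespace GoodLower

variable {α : ℝ} {p q p' q' : ℤ}

theorem abs_le (h : GoodLower α p q) (hq' : 1 ≤ q') (hle : q' ≤ q)
    (hneg : (p' : ℝ) - q' * α < 0) : |(p : ℝ) - q * α| ≤ |(p' : ℝ) - q' * α| := by
  by_cases he : (p', q') = (p, q)
  · obtain ⟨rfl, rfl⟩ := Prod.mk.inj he
    rfl
  · exact (h.2.2 p' q' he hq' hle hneg).le

theorem abs_lt (h : GoodLower α p q) (hq' : 1 ≤ q') (hlt : q' < q)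
    (hneg : (p' : ℝ) - q' * α < 0) : |(p : ℝ) - q * α| < |(p' : ℝ) - q' * α| :=
  h.2.2 p' q' (fun he => hlt.ne (Prod.mk.inj he).2) hq' hlt.le hneg

theorem abs_sub_le_one (h : GoodLower α p q) : |(p : ℝ) - q * α| ≤ 1 := by
  have hlt := Int.ceil_lt_add_one α
  have hle := Int.le_ceil α
  calc |(p : ℝ) - q * α| ≤ |((⌈α⌉ - 1 : ℤ) : ℝ) - (1 : ℤ) * α| :=
        h.abs_le le_rfl h.1 (by push_cast; linarith)
    _ ≤ 1 := by rw [_root_.abs_le]; push_cast; constructor <;> linarith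

end GoodLower

namespace GoodUpper

variable {α : ℝ} {p q p' q' : ℤ}

theorem abs_le (h : GoodUpper α p q) (hq' : 1 ≤ q') (hle : q' ≤ q)
    (hpos : 0 < (p' : ℝ) - q' * α) : |(p : ℝ) - q * α| ≤ |(p' : ℝ) - q' * α| := by
  by_cases he : (p', q') = (p, q)
  · obtain ⟨rfl, rfl⟩ := Prod.mk.inj he
    rfl
  · exact (h.2.2 p' q' he hq' hle hpos).le

theorem abs_lt (h : GoodUpper α p q) (hq' : 1 ≤ q') (hlt : q' < q)
    (hpos : 0 < (p' : ℝ) - q' * α) : |(p : ℝ) - q * α| < |(p' : ℝ) - q' * α| :=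
  h.2.2 p' q' (fun he => hlt.ne (Prod.mk.inj he).2) hq' hlt.le hpos

theorem abs_sub_le_one (h : GoodUpper α p q) : |(p : ℝ) - q * α| ≤ 1 := by
  have hlt := Int.lt_floor_add_one α
  have hle := Int.floor_le α
  calc |(p : ℝ) - q * α| ≤ |((⌊α⌋ + 1 : ℤ) : ℝ) - (1 : ℤ) * α| :=
        h.abs_le le_rfl h.1 (by push_cast; linarith)
    _ ≤ 1 := by rw [_root_.abs_le]; push_cast; constructor <;> linarith

end GoodUpper

def IsGoodApprox (α : ℝ) (p q : ℤ) : Prop :=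
  GoodLower α p q ∨ GoodUpper α p q

theorem IsGoodApprox.abs_sub_le_one {α : ℝ} {p q : ℤ} (h : IsGoodApprox α p q) :
    |(p : ℝ) - q * α| ≤ 1 :=
  h.elim GoodLower.abs_sub_le_one GoodUpper.abs_sub_le_one

theorem Irrational.exists_forall_isGoodApprox_abs_lt {α : ℝ} (hα : Irrational α) {ε : ℝ}
    (hε : 0 < ε) : ∃ Q : ℕ, ∀ p q : ℤ, IsGoodApprox α p q → (Q : ℤ) < q →
      |(p : ℝ) - q * α| < ε := by
  obtain ⟨p₁, q₁, hq₁, h₁⟩ := hα.exists_sub_mul_mem_Ioo_neg hε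
  obtain ⟨p₂, q₂, hq₂, h₂⟩ := hα.exists_sub_mul_mem_Ioo hε
  refine ⟨(max q₁ q₂).toNat, fun p q hpq hQ => ?_⟩
  rcases hpq with h | h
  · calc |(p : ℝ) - q * α| < |(p₁ : ℝ) - q₁ * α| := h.abs_lt hq₁ (by omega) h₁.2
      _ < ε := by rw [abs_of_neg h₁.2]; linarith [h₁.1]
  · calc |(p : ℝ) - q * α| < |(p₂ : ℝ) - q₂ * α| := h.abs_lt hq₂ (by omega) h₂.1
      _ < ε := by rw [abs_of_pos h₂.1]; exact h₂.2

section tcoord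

variable {α β : ℝ} {m n m' n' : ℤ}

theorem tcoord_sub_self (hαβ : α ≠ β) (m n : ℤ) :
    tcoord α β m n - m = ((n : ℝ) - m * α) / (α - β) := by
  rw [tcoord, div_sub' (sub_ne_zero.mpr hαβ)]
  ring_nf

theorem IsGoodApprox.tcoord_le (hβα : β < α) (h : IsGoodApprox α n m) :
    tcoord α β m n ≤ m + 1 / (α - β) := by
  have hd : 0 < α - β := sub_pos.mpr hβα
  have hsub := tcoord_sub_self hβα.ne' m n
  have : ((n : ℝ) - m * α) / (α - β) ≤ 1 / (α - β) := by
    gcongr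
    exact (le_abs_self _).trans h.abs_sub_le_one
  linarith

theorem abs_tcoord_sub_lt (hβα : β < α) (h : |(n : ℝ) - m * α| < (α - β) / 2) :
    |tcoord α β m n - m| < 1 / 2 := by
  have hd : 0 < α - β := sub_pos.mpr hβα
  rw [tcoord_sub_self hβα.ne', abs_div, abs_of_pos hd, div_lt_iff₀ hd]
  linarith

theorem tcoord_lt_tcoord (hβα : β < α) (h : |(n : ℝ) - m * α| < (α - β) / 2)
    (h' : |(n' : ℝ) - m' * α| < (α - β) / 2) (hm : m' < m) :
    tcoord α β m' n' < tcoord α β m n := by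
  have : (m' : ℝ) + 1 ≤ m := by exact_mod_cast hm
  linarith [abs_lt.mp (abs_tcoord_sub_lt hβα h), abs_lt.mp (abs_tcoord_sub_lt hβα h')]

theorem tcoord_le_tcoord_iff (hβα : β < α)
    (h : |(n : ℝ) - m * α| < min (1 / 2) ((α - β) / 2))
    (h' : |(n' : ℝ) - m' * α| < min (1 / 2) ((α - β) / 2)) :
    tcoord α β m' n' ≤ tcoord α β m n ↔ m' ≤ m := by
  rw [lt_min_iff] at h h'
  constructor
  · contrapose!
    exact tcoord_lt_tcoord hβα h'.2 h.2
  · intro hle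
    rcases hle.lt_or_eq with hlt | rfl
    · exact (tcoord_lt_tcoord hβα h.2 h'.2 hlt).le
    · rw [Int.eq_of_abs_sub_lt_half h'.1 h.1]

end tcoord

theorem stmt11_general (A : Matrix (Fin 2) (Fin 2) ℤ)
    (lam α β : ℝ)
    (hlam0 : 0 < lam) (hlam1 : lam < 1)
    (hAα0 : (A 0 0 : ℝ) + A 0 1 * α = lam)
    (hAα1 : (A 1 0 : ℝ) + A 1 1 * α = lam * α)
    (hβα : β < α) :
    ∃ t₀ > (0 : ℝ), ∀ m n m' n' : ℤ, 1 ≤ m → 1 ≤ m' → 0 ≤ n → 0 ≤ n' →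
      t₀ ≤ tcoord α β m n → t₀ ≤ tcoord α β m' n' →
      (GoodLower α n m ∨ GoodUpper α n m) →
      (GoodLower α n' m' ∨ GoodUpper α n' m') →
      (tcoord α β m' n' ≤ tcoord α β m n ↔ m' ≤ m) := by
  have hα : Irrational α :=
    irrational_of_eigenvector A hlam0.ne' (by rwa [abs_of_pos hlam0]) hAα0 hAα1
  have hd : 0 < α - β := sub_pos.mpr hβα
  obtain ⟨Q, hQ⟩ := hα.exists_forall_isGoodApprox_abs_lt (lt_min one_half_pos (half_pos hd))
  have large : ∀ {a b : ℤ}, IsGoodApprox α b a → Q + 1 + 1 / (α - β) ≤ tcoord α β a b →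
      (Q : ℤ) < a := by
    intro a b hab ht
    have := hab.tcoord_le hβα
    have : (Q : ℝ) + 1 ≤ a := by linarith
    exact_mod_cast this
  refine ⟨Q + 1 + 1 / (α - β), by positivity, fun m n m' n' _ _ _ _ ht ht' hg hg' => ?_⟩
  exact tcoord_le_tcoord_iff hβα (hQ n m hg (large hg ht)) (hQ n' m' hg' (large hg' ht'))

/-- There exists `t₀ > 0` such that for all `(m,n), (m′,n′) ∈ ℤ²` with
`m, m′ ≥ 1`, `n, n′ ≥ 0`, `t_{(m,n)} ≥ t₀`, `t_{(m′,n′)} ≥ t₀`, and such that each of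
`(n,m)` and `(n′,m′)` is a good lower or a good upper approximation of the second kind of
`α`: `t_{(m,n)} ≥ t_{(m′,n′)}` if and only if `m ≥ m′`. -/
theorem stmt11 (A : Matrix (Fin 2) (Fin 2) ℤ) (hdet : A.det = 1)
    (lam mu α β : ℝ)
    (hlam0 : 0 < lam) (hlam1 : lam < 1) (hmu : 1 < mu)
    (hAα0 : (A 0 0 : ℝ) + A 0 1 * α = lam)
    (hAα1 : (A 1 0 : ℝ) + A 1 1 * α = lam * α)
    (hAβ0 : (A 0 0 : ℝ) + A 0 1 * β = mu)
    (hAβ1 : (A 1 0 : ℝ) + A 1 1 * β = mu * β)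
    (hβα : β < α) (hα : 0 < α) :
    ∃ t₀ > (0 : ℝ), ∀ m n m' n' : ℤ, 1 ≤ m → 1 ≤ m' → 0 ≤ n → 0 ≤ n' →
      t₀ ≤ tcoord α β m n → t₀ ≤ tcoord α β m' n' →
      (GoodLower α n m ∨ GoodUpper α n m) →
      (GoodLower α n' m' ∨ GoodUpper α n' m') →
      (tcoord α β m' n' ≤ tcoord α β m n ↔ m' ≤ m) :=
  stmt11_general A lam α β hlam0 hlam1 hAα0 hAα1 hβα
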